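/- The magnitude of the forgetting score is bounded by the KL drift: if each per-benchmark score is an expectation of a [0,1]-valued function under the policy on a benchmark-specific prompt distribution, then |F(π_θ)| ≤ max over benchmarks b of E_{x~D_b}[√(2·KL(π_θ(·|x)‖π_0(·|x)))]. -/

import Mathlib

open Real

noncomputable def Fc : ℝ → ℝ := fun x => x * Real.log x - x + 1 - 3/2*(x-1)^2/(x+2)
noncomputable def Pc : ℝ → ℝ := fun x => Real.log x - 3/2*((x-1)*(x+5))/(x+2)^2

lemma hasDerivF {x : ℝ} (hx : 0 < x) : HasDerivAt Fc (Pc x) x := by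
  have hne : x + 2 ≠ 0 := by positivity
  have h1 : HasDerivAt (fun x : ℝ => x * Real.log x) (Real.log x + 1) x := by
    have := (hasDerivAt_id' x).mul (Real.hasDerivAt_log hx.ne')
    exact this.congr_deriv (by rw [mul_inv_cancel₀ hx.ne']; ring)
  have hu : HasDerivAt (fun x : ℝ => 3/2*(x-1)^2) (3*(x-1)) x := by
    have := (((hasDerivAt_id x).sub_const 1).pow 2).const_mul (3/2 : ℝ)
    simp only [id_eq] at this
    exact this.congr_deriv (by ring)
  have hv : HasDerivAt (fun x : ℝ => x + 2) 1 x := (hasDerivAt_id x).add_const 2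
  have h2 := hu.div hv hne
  have h3 := ((h1.sub (hasDerivAt_id x)).add_const 1).sub h2
  exact h3.congr_deriv (by
    unfold Pc
    field_simp
    ring)

lemma hasDerivP {x : ℝ} (hx : 0 < x) : HasDerivAt Pc ((x-1)^2*(x+8)/(x*(x+2)^3)) x := by
  have hne : x + 2 ≠ 0 := by positivity
  have hne2 : (x + 2)^2 ≠ 0 := pow_ne_zero _ hne
  have hu : HasDerivAt (fun x : ℝ => 3/2*((x-1)*(x+5))) (3*x+6) x := by
    have := (((hasDerivAt_id x).sub_const 1).mul ((hasDerivAt_id x).add_const 5)).const_mul (3/2 : ℝ)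
    simp only [id_eq] at this
    exact this.congr_deriv (by ring)
  have hv : HasDerivAt (fun x : ℝ => (x+2)^2) (2*(x+2)) x := by
    have := ((hasDerivAt_id x).add_const 2).pow 2
    simp only [id_eq] at this
    exact this.congr_deriv (by ring)
  have h2 := (Real.hasDerivAt_log hx.ne').sub (hu.div hv hne2)
  exact h2.congr_deriv (by
    field_simp
    ring)

lemma F_nonneg {x : ℝ} (hx : 0 < x) : 0 ≤ Fc x := by
  have hPmono : MonotoneOn Pc (Set.Ioi 0) := by
    refine monotoneOn_of_deriv_nonneg (convex_Ioi 0) ?_ ?_ ?_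
    · exact fun y hy => ((hasDerivP hy).differentiableAt.continuousAt).continuousWithinAt
    · rw [interior_Ioi]
      exact fun y hy => (hasDerivP hy).differentiableAt.differentiableWithinAt
    · rw [interior_Ioi]
      intro y hy
      rw [(hasDerivP hy).deriv]
      have hy' : (0:ℝ) < y := hy
      positivity
  have hP1 : Pc 1 = 0 := by simp [Pc]
  have hF1 : Fc 1 = 0 := by simp [Fc]
  rcases le_total x 1 with h | h
  · have hanti : AntitoneOn Fc (Set.Ioc 0 1) := by
      refine antitoneOn_of_deriv_nonpos (convex_Ioc 0 1) ?_ ?_ ?_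
      · exact fun y hy => ((hasDerivF hy.1).differentiableAt.continuousAt).continuousWithinAt
      · rw [interior_Ioc]
        exact fun y hy => (hasDerivF hy.1).differentiableAt.differentiableWithinAt
      · rw [interior_Ioc]
        intro y hy
        rw [(hasDerivF hy.1).deriv]
        have := hPmono (Set.mem_Ioi.2 hy.1) (Set.mem_Ioi.2 one_pos) hy.2.le
        linarith [hP1 ▸ this]
    have := hanti (Set.mem_Ioc.2 ⟨hx, h⟩) (Set.mem_Ioc.2 ⟨one_pos, le_refl 1⟩) h
    linarith [hF1 ▸ this]
  · have hmono : MonotoneOn Fc (Set.Ici 1) := by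
      refine monotoneOn_of_deriv_nonneg (convex_Ici 1) ?_ ?_ ?_
      · exact fun y hy => ((hasDerivF (lt_of_lt_of_le one_pos hy)).differentiableAt.continuousAt).continuousWithinAt
      · rw [interior_Ici]
        exact fun y hy => (hasDerivF (lt_trans one_pos hy)).differentiableAt.differentiableWithinAt
      · rw [interior_Ici]
        intro y hy
        rw [(hasDerivF (lt_trans one_pos hy)).deriv]
        have := hPmono (Set.mem_Ioi.2 one_pos) (Set.mem_Ioi.2 (lt_trans one_pos hy)) hy.le
        linarith [hP1 ▸ this]
    have := hmono (Set.mem_Ici.2 (le_refl 1)) (Set.mem_Ici.2 h) h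
    linarith [hF1 ▸ this]

lemma log_key {x : ℝ} (hx : 0 < x) : 3/2*(x-1)^2/(x+2) ≤ x * Real.log x - x + 1 := by
  have := F_nonneg hx
  unfold Fc at this
  linarith

lemma pq_key {p q : ℝ} (hp : 0 ≤ p) (hq : 0 ≤ q) (hac : 0 < p → 0 < q) :
    3/2*(p-q)^2/(p+2*q) ≤ p * Real.log (p/q) - p + q := by
  rcases hp.eq_or_lt' with hp0 | hp0
  · rcases hq.eq_or_lt' with hq0 | hq0
    · simp [hp0, hq0]
    · have h1 : 3/2*(p-q)^2/(p+2*q) = 3/4 * q := by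
        rw [hp0]; field_simp; ring
      rw [h1, hp0]
      simp only [zero_mul, zero_sub, sub_zero, zero_add, neg_add_cancel, zero_div]
      linarith
  · have hq0 : 0 < q := hac hp0
    have hx : 0 < p / q := div_pos hp0 hq0
    have hd : (0:ℝ) < p + 2*q := by linarith
    have h2 := mul_le_mul_of_nonneg_left (log_key hx) hq
    have e1 : q * (3/2*(p/q-1)^2/(p/q+2)) = 3/2*(p-q)^2/(p+2*q) := by
      field_simp
    have e2 : q * (p/q * Real.log (p/q) - p/q + 1) = p * Real.log (p/q) - p + q := by
      field_simp
    rw [e1, e2] at h2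
    exact h2

lemma pinsker_fin {Y : Type*} [Fintype Y] (p q : Y → ℝ) (hp0 : ∀ y, 0 ≤ p y)
    (hp1 : ∑ y, p y = 1) (hq0 : ∀ y, 0 ≤ q y) (hq1 : ∑ y, q y = 1)
    (hac : ∀ y, 0 < p y → 0 < q y) :
    ∑ y, |p y - q y| ≤ Real.sqrt (2 * ∑ y, p y * Real.log (p y / q y)) := by
  set T : ℝ := ∑ y, (p y - q y)^2 / (p y + 2 * q y) with hT
  have hCS : (∑ y, |p y - q y|)^2 ≤ T * 3 := by
    have h3 : ∑ y, (p y + 2 * q y) = 3 := by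
      rw [Finset.sum_add_distrib, ← Finset.mul_sum, hp1, hq1]; norm_num
    have := Finset.sum_sq_le_sum_mul_sum_of_sq_eq_mul Finset.univ
      (r := fun y => |p y - q y|) (f := fun y => (p y - q y)^2 / (p y + 2 * q y))
      (g := fun y => p y + 2 * q y)
      (fun y _ => by exact div_nonneg (sq_nonneg _) (by linarith [hp0 y, hq0 y]))
      (fun y _ => by linarith [hp0 y, hq0 y])
      (fun y _ => by
        rcases eq_or_lt_of_le (by linarith [hp0 y, hq0 y] : (0:ℝ) ≤ p y + 2 * q y) with h | h
        · have hpy : p y = 0 := by linarith [hp0 y, hq0 y]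
          have hqy : q y = 0 := by linarith [hp0 y, hq0 y]
          simp [hpy, hqy]
        · rw [sq_abs]
          exact (div_mul_cancel₀ _ h.ne').symm)
    rw [h3] at this
    exact this
  have hKL : T * 3 ≤ 2 * ∑ y, p y * Real.log (p y / q y) := by
    have hsum : ∑ y, (p y * Real.log (p y / q y) - p y + q y)
        = ∑ y, p y * Real.log (p y / q y) := by
      simp [Finset.sum_add_distrib, Finset.sum_sub_distrib, hp1, hq1]
    have hpt : (3/2) * T ≤ ∑ y, (p y * Real.log (p y / q y) - p y + q y) := by
      rw [hT, Finset.mul_sum]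
      refine Finset.sum_le_sum fun y _ => ?_
      have := pq_key (hp0 y) (hq0 y) (hac y)
      calc 3/2 * ((p y - q y)^2 / (p y + 2 * q y))
          = 3/2*(p y - q y)^2/(p y + 2 * q y) := by ring
        _ ≤ _ := this
    rw [hsum] at hpt
    linarith
  have habs : 0 ≤ ∑ y, |p y - q y| := Finset.sum_nonneg fun y _ => abs_nonneg _
  have := Real.sqrt_le_sqrt (le_trans hCS hKL)
  rwa [Real.sqrt_sq habs] at this




/-- the magnitude of the forgetting score is bounded by the
maximal per-benchmark expected √(2·KL) drift. -/
theorem stmt_16 {B X Y : Type*} [Fintype B] [Nonempty B] [Fintype X] [Fintype Y]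
    (D : B → X → ℝ) (πθ π₀ : X → Y → ℝ) (f : B → X → Y → ℝ)
    (hD0 : ∀ b x, 0 ≤ D b x) (hD1 : ∀ b, ∑ x, D b x = 1)
    (hθ0 : ∀ x y, 0 ≤ πθ x y) (hθ1 : ∀ x, ∑ y, πθ x y = 1)
    (h₀0 : ∀ x y, 0 ≤ π₀ x y) (h₀1 : ∀ x, ∑ y, π₀ x y = 1)
    (hac : ∀ x y, 0 < πθ x y → 0 < π₀ x y)
    (hf : ∀ b x y, f b x y ∈ Set.Icc (0:ℝ) 1) :
    |(1 / (Fintype.card B : ℝ)) *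
        ∑ b, min ((∑ x, D b x * ∑ y, πθ x y * f b x y)
                    - (∑ x, D b x * ∑ y, π₀ x y * f b x y)) 0|
      ≤ Finset.univ.sup' Finset.univ_nonempty
          (fun b => ∑ x, D b x *
            Real.sqrt (2 * ∑ y, πθ x y * Real.log (πθ x y / π₀ x y))) := by

  have hn : (0:ℝ) < (Fintype.card B : ℝ) := by
    exact_mod_cast Fintype.card_pos
  set M : B → ℝ := fun b => ∑ x, D b x *
    Real.sqrt (2 * ∑ y, πθ x y * Real.log (πθ x y / π₀ x y)) with hM
  set S : ℝ := Finset.univ.sup' Finset.univ_nonempty M with hS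
  -- per-benchmark bound
  have hΔ : ∀ b, |(∑ x, D b x * ∑ y, πθ x y * f b x y)
      - (∑ x, D b x * ∑ y, π₀ x y * f b x y)| ≤ M b := by
    intro b
    rw [← Finset.sum_sub_distrib]
    calc |∑ x, (D b x * ∑ y, πθ x y * f b x y - D b x * ∑ y, π₀ x y * f b x y)|
        ≤ ∑ x, |D b x * ∑ y, πθ x y * f b x y - D b x * ∑ y, π₀ x y * f b x y| :=
          Finset.abs_sum_le_sum_abs _ _
      _ ≤ M b := by
          rw [hM]
          refine Finset.sum_le_sum fun x _ => ?_
          rw [← mul_sub, abs_mul, abs_of_nonneg (hD0 b x)]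
          refine mul_le_mul_of_nonneg_left ?_ (hD0 b x)
          calc |(∑ y, πθ x y * f b x y) - ∑ y, π₀ x y * f b x y|
              = |∑ y, (πθ x y - π₀ x y) * f b x y| := by
                rw [← Finset.sum_sub_distrib]
                congr 1
                exact Finset.sum_congr rfl fun y _ => by ring
            _ ≤ ∑ y, |(πθ x y - π₀ x y) * f b x y| := Finset.abs_sum_le_sum_abs _ _
            _ ≤ ∑ y, |πθ x y - π₀ x y| := by
                refine Finset.sum_le_sum fun y _ => ?_
                rw [abs_mul]
                have h1 : |f b x y| ≤ 1 := by
                  rw [abs_of_nonneg (hf b x y).1]; exact (hf b x y).2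
                nlinarith [abs_nonneg (πθ x y - π₀ x y)]
            _ ≤ Real.sqrt (2 * ∑ y, πθ x y * Real.log (πθ x y / π₀ x y)) :=
                pinsker_fin (πθ x) (π₀ x) (hθ0 x) (hθ1 x) (h₀0 x) (h₀1 x) (hac x)
  have hMS : ∀ b, M b ≤ S := fun b => Finset.le_sup' M (Finset.mem_univ b)
  calc |(1 / (Fintype.card B : ℝ)) *
        ∑ b, min ((∑ x, D b x * ∑ y, πθ x y * f b x y)
                    - (∑ x, D b x * ∑ y, π₀ x y * f b x y)) 0|
      ≤ (1 / (Fintype.card B : ℝ)) * ∑ b, M b := by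
        rw [abs_mul, abs_of_nonneg (by positivity : (0:ℝ) ≤ 1 / (Fintype.card B : ℝ))]
        refine mul_le_mul_of_nonneg_left ?_ (by positivity)
        calc |∑ b, min ((∑ x, D b x * ∑ y, πθ x y * f b x y)
                    - (∑ x, D b x * ∑ y, π₀ x y * f b x y)) 0|
            ≤ ∑ b, |min ((∑ x, D b x * ∑ y, πθ x y * f b x y)
                    - (∑ x, D b x * ∑ y, π₀ x y * f b x y)) 0| :=
              Finset.abs_sum_le_sum_abs _ _
          _ ≤ ∑ b, M b := by
              refine Finset.sum_le_sum fun b _ => ?_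
              refine le_trans ?_ (hΔ b)
              rcases le_total ((∑ x, D b x * ∑ y, πθ x y * f b x y)
                    - (∑ x, D b x * ∑ y, π₀ x y * f b x y)) 0 with h | h
              · rw [min_eq_left h]
              · rw [min_eq_right h]
                simp [abs_nonneg]
    _ ≤ (1 / (Fintype.card B : ℝ)) * ((Fintype.card B : ℝ) * S) := by
        refine mul_le_mul_of_nonneg_left ?_ (by positivity)
        calc ∑ b, M b ≤ ∑ _b : B, S := Finset.sum_le_sum fun b _ => hMS b
          _ = (Fintype.card B : ℝ) * S := by
              rw [Finset.sum_const, Finset.card_univ, nsmul_eq_mul]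
    _ = S := by field_simp
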